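/- arXiv:2504.16959 — 2 statements merged into one kernel-verified Lean document; each statement's English description precedes it below -/
import Mathlib

section
/- Fix ℓ_max ≥ 1 and let I = {(ℓ, m) ∈ ℤ² : 1 ≤ ℓ ≤ ℓ_max, −ℓ ≤ m ≤ ℓ}. Let Ξ be a Hermitian positive definite complex matrix indexed by I × I, and let {a_{ℓm}}_{(ℓ,m)∈I} be any complex numbers. Define the real ℓ_max × ℓ_max matrix Σ with entries Σ_{ℓ,ℓ'} = (1/((1+2ℓ)(1+2ℓ'))) · Σ_{m=−ℓ}^{ℓ} Σ_{m'=−ℓ'}^{ℓ'} ( |Ξ_{ℓm,ℓ'm'}|² + 2 Re( conj(a_{ℓm}) Ξ_{ℓm,ℓ'm'} a_{ℓ'm'} ) ). Then Σ is symmetric and positive definite. -/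
open Matrix
open scoped BigOperators ComplexOrder

/-- The index set `I = {(ℓ, m) ∈ ℤ² : 1 ≤ ℓ ≤ L, −ℓ ≤ m ≤ ℓ}`. -/
noncomputable def Idx (L : ℤ) : Finset (ℤ × ℤ) :=
  (Finset.Icc 1 L ×ˢ Finset.Icc (-L) L).filter fun p => -p.1 ≤ p.2 ∧ p.2 ≤ p.1

/-- The real `ℓ_max × ℓ_max` matrix with entries
`Σ_{ℓ,ℓ'} = (1/((1+2ℓ)(1+2ℓ'))) Σ_{m=−ℓ}^{ℓ} Σ_{m'=−ℓ'}^{ℓ'}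
  (|Ξ_{ℓm,ℓ'm'}|² + 2 Re(conj(a_{ℓm}) Ξ_{ℓm,ℓ'm'} a_{ℓ'm'}))`. -/
noncomputable def SigmaMat (L : ℤ) (Ξ : Matrix ↥(Idx L) ↥(Idx L) ℂ) (a : ↥(Idx L) → ℂ) :
    Matrix ↥(Finset.Icc (1 : ℤ) L) ↥(Finset.Icc (1 : ℤ) L) ℝ :=
  Matrix.of fun ℓ ℓ' =>
    (((1 + 2 * ℓ.val) * (1 + 2 * ℓ'.val) : ℤ) : ℝ)⁻¹ *
      ∑ p : ↥(Idx L), ∑ q : ↥(Idx L),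
        if p.val.1 = ℓ.val ∧ q.val.1 = ℓ'.val then
          ‖Ξ p q‖ ^ 2 + 2 * ((starRingEnd ℂ) (a p) * Ξ p q * a q).re
        else 0

lemma idx_fst_mem {L : ℤ} (p : ↥(Idx L)) : p.val.1 ∈ Finset.Icc (1 : ℤ) L := by
  have h := p.2
  simp only [Idx, Finset.mem_filter, Finset.mem_product] at h
  exact h.1.1

lemma idx_fst_pos {L : ℤ} (p : ↥(Idx L)) : (0 : ℤ) < 1 + 2 * p.val.1 := by
  have h := idx_fst_mem p
  simp only [Finset.mem_Icc] at h
  omega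

lemma zero_mem_idx {L : ℤ} (ℓ : ↥(Finset.Icc (1 : ℤ) L)) : (ℓ.val, (0 : ℤ)) ∈ Idx L := by
  have h := ℓ.2
  simp only [Finset.mem_Icc] at h
  simp only [Idx, Finset.mem_filter, Finset.mem_product, Finset.mem_Icc]
  omega

/-- the summand -/
noncomputable def Xterm {L : ℤ} (Ξ : Matrix ↥(Idx L) ↥(Idx L) ℂ) (a : ↥(Idx L) → ℂ)
    (p q : ↥(Idx L)) : ℝ :=
  ‖Ξ p q‖ ^ 2 + 2 * ((starRingEnd ℂ) (a p) * Ξ p q * a q).re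

lemma Xterm_symm {L : ℤ} {Ξ : Matrix ↥(Idx L) ↥(Idx L) ℂ} (hΞ : Ξ.IsHermitian)
    (a : ↥(Idx L) → ℂ) (p q : ↥(Idx L)) : Xterm Ξ a q p = Xterm Ξ a p q := by
  have hΞapp : Ξ q p = (starRingEnd ℂ) (Ξ p q) := by
    rw [← hΞ.apply p q]; simp
  have h2 : (starRingEnd ℂ) (a q) * Ξ q p * a p
      = (starRingEnd ℂ) ((starRingEnd ℂ) (a p) * Ξ p q * a q) := by
    rw [hΞapp]
    simp only [map_mul (starRingEnd ℂ), RingHomCompTriple.comp_apply, RingHom.id_apply,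
      starRingEnd_self_apply]
    ring
  rw [Xterm, Xterm, h2, hΞapp, Complex.conj_re, Complex.norm_conj]

lemma sigmaMat_apply (L : ℤ) (Ξ : Matrix ↥(Idx L) ↥(Idx L) ℂ) (a : ↥(Idx L) → ℂ)
    (ℓ ℓ' : ↥(Finset.Icc (1 : ℤ) L)) :
    SigmaMat L Ξ a ℓ ℓ' = (((1 + 2 * ℓ.val) * (1 + 2 * ℓ'.val) : ℤ) : ℝ)⁻¹ *
      ∑ p : ↥(Idx L), ∑ q : ↥(Idx L),
        if p.val.1 = ℓ.val ∧ q.val.1 = ℓ'.val then Xterm Ξ a p q else 0 := rfl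

lemma sigmaMat_isSymm (L : ℤ) (Ξ : Matrix ↥(Idx L) ↥(Idx L) ℂ) (hΞ : Ξ.IsHermitian)
    (a : ↥(Idx L) → ℂ) : (SigmaMat L Ξ a).IsSymm := by
  rw [Matrix.IsSymm]
  ext ℓ ℓ'
  rw [Matrix.transpose_apply, sigmaMat_apply, sigmaMat_apply]
  rw [Finset.sum_comm]
  have hc : (((1 + 2 * ℓ'.val) * (1 + 2 * ℓ.val) : ℤ) : ℝ)⁻¹
      = (((1 + 2 * ℓ.val) * (1 + 2 * ℓ'.val) : ℤ) : ℝ)⁻¹ := by rw [mul_comm]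
  rw [hc]
  congr 1
  refine Finset.sum_congr rfl fun p _ => Finset.sum_congr rfl fun q _ => ?_
  by_cases h : p.val.1 = ℓ.val ∧ q.val.1 = ℓ'.val
  · rw [if_pos ⟨h.2, h.1⟩, if_pos h, Xterm_symm hΞ]
  · rw [if_neg (fun hc => h ⟨hc.2, hc.1⟩), if_neg h]

set_option maxHeartbeats 2000000 in
/-- for `ℓ_max ≥ 1`, a Hermitian positive definite matrix `Ξ` indexed by
`I × I` and arbitrary complex numbers `a_{ℓm}`, the matrix `Σ` defined above is symmetric
and positive definite. -/
theorem sigmaMat_isSymm_posDef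
    (L : ℤ) (hL : 1 ≤ L) (Ξ : Matrix ↥(Idx L) ↥(Idx L) ℂ) (hΞ : Ξ.PosDef)
    (a : ↥(Idx L) → ℂ) :
    (SigmaMat L Ξ a).IsSymm ∧ (SigmaMat L Ξ a).PosDef := by
  classical
  have hsymm := sigmaMat_isSymm L Ξ hΞ.1 a
  refine ⟨hsymm, Matrix.posDef_iff_dotProduct_mulVec.mpr ⟨?_, ?_⟩⟩
  · rw [Matrix.IsHermitian, Matrix.conjTranspose_eq_transpose_of_trivial]
    exact hsymm
  intro d hd
  rw [star_trivial]
  -- the weight vector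
  set w : ↥(Idx L) → ℝ :=
    fun p => (((1 + 2 * p.val.1 : ℤ) : ℝ))⁻¹ * d ⟨p.val.1, idx_fst_mem p⟩ with hwdef
  set E : Matrix ↥(Idx L) ↥(Finset.Icc (1 : ℤ) L) ℝ := Matrix.of fun p ℓ =>
    if p.val.1 = ℓ.val then (((1 + 2 * ℓ.val : ℤ) : ℝ))⁻¹ else 0 with hEdef
  have hfact : SigmaMat L Ξ a = Eᵀ * Matrix.of (Xterm Ξ a) * E := by
    ext ℓ ℓ'
    rw [sigmaMat_apply]
    simp only [Matrix.mul_apply, Matrix.transpose_apply, hEdef, Matrix.of_apply,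
      Finset.sum_mul, Finset.mul_sum]
    rw [Finset.sum_comm]
    refine Finset.sum_congr rfl fun p _ => Finset.sum_congr rfl fun q _ => ?_
    by_cases h1 : q.val.1 = ℓ.val
    · by_cases h2 : p.val.1 = ℓ'.val
      · rw [if_pos ⟨h1, h2⟩, if_pos h1, if_pos h2]
        push_cast
        rw [mul_inv]
        ring
      · rw [if_neg (fun hc => h2 hc.2), if_neg h2, mul_zero, mul_zero]
    · rw [if_neg (fun hc => h1 hc.1), if_neg h1, mul_zero, zero_mul, zero_mul]
  have hEd : E *ᵥ d = w := by
    funext p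
    simp only [Matrix.mulVec, dotProduct, hEdef, Matrix.of_apply]
    rw [Fintype.sum_eq_single (⟨p.val.1, idx_fst_mem p⟩ : ↥(Finset.Icc (1 : ℤ) L))]
    · rw [if_pos rfl]
    · intro ℓ hℓ
      rw [if_neg, zero_mul]
      intro h
      exact hℓ (Subtype.ext h.symm)
  have hquad : d ⬝ᵥ (SigmaMat L Ξ a) *ᵥ d
      = ∑ p : ↥(Idx L), ∑ q : ↥(Idx L), w p * w q * Xterm Ξ a p q := by
    rw [hfact, ← Matrix.mulVec_mulVec, ← Matrix.mulVec_mulVec, Matrix.dotProduct_mulVec,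
      Matrix.vecMul_transpose, hEd]
    simp only [dotProduct, Matrix.mulVec, Matrix.of_apply, Finset.mul_sum]
    refine Finset.sum_congr rfl fun p _ => Finset.sum_congr rfl fun q _ => ?_
    ring
  rw [hquad]
  -- split into main (abs^2) and cross terms
  have hsplit : ∑ p : ↥(Idx L), ∑ q : ↥(Idx L), w p * w q * Xterm Ξ a p q
      = (∑ p : ↥(Idx L), ∑ q : ↥(Idx L), w p * w q * ‖Ξ p q‖ ^ 2)
        + ∑ p : ↥(Idx L), ∑ q : ↥(Idx L),
            w p * w q * (2 * ((starRingEnd ℂ) (a p) * Ξ p q * a q).re) := by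
    rw [← Finset.sum_add_distrib]
    refine Finset.sum_congr rfl fun p _ => ?_
    rw [← Finset.sum_add_distrib]
    refine Finset.sum_congr rfl fun q _ => ?_
    rw [Xterm]
    ring
  rw [hsplit]
  -- the cross term is nonnegative
  set z : ↥(Idx L) → ℂ := fun p => (w p : ℂ) * a p with hzdef
  have hcross : ∑ p : ↥(Idx L), ∑ q : ↥(Idx L),
      w p * w q * (2 * ((starRingEnd ℂ) (a p) * Ξ p q * a q).re)
      = 2 * (star z ⬝ᵥ Ξ *ᵥ z).re := by
    simp only [dotProduct, Matrix.mulVec, Pi.star_apply, Finset.mul_sum,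
      Complex.re_sum]
    refine Finset.sum_congr rfl fun p _ => ?_
    refine Finset.sum_congr rfl fun q _ => ?_
    have h1 : star (z p) * (Ξ p q * z q)
        = ((w p * w q : ℝ) : ℂ) * ((starRingEnd ℂ) (a p) * Ξ p q * a q) := by
      simp only [hzdef, star_mul', Complex.star_def, Complex.conj_ofReal]
      push_cast
      ring
    rw [h1, Complex.re_ofReal_mul]
    ring
  have hcross_nonneg : 0 ≤ ∑ p : ↥(Idx L), ∑ q : ↥(Idx L),
      w p * w q * (2 * ((starRingEnd ℂ) (a p) * Ξ p q * a q).re) := by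
    rw [hcross]
    have := (Complex.nonneg_iff.mp (hΞ.posSemidef.dotProduct_mulVec_nonneg z)).1
    linarith
  -- the main term is positive
  have hΞconj : ∀ p q : ↥(Idx L), Ξ q p = (starRingEnd ℂ) (Ξ p q) := by
    intro p q
    rw [← hΞ.1.apply p q]
    simp
  open scoped MatrixOrder in
  set S := CFC.sqrt Ξ with hSdef
  open scoped MatrixOrder in
  have hSherm : Sᴴ = S := (CFC.sqrt_nonneg Ξ).posSemidef.1
  open scoped MatrixOrder in
  have hSS : S * S = Ξ := CFC.sqrt_mul_sqrt_self Ξ hΞ.posSemidef.nonneg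
  set W : Matrix ↥(Idx L) ↥(Idx L) ℂ := Matrix.diagonal (fun p => (w p : ℂ)) with hWdef
  have hWherm : Wᴴ = W := by
    rw [hWdef, Matrix.diagonal_conjTranspose]
    have hstar : (star fun p : ↥(Idx L) => ((w p : ℂ))) = fun p : ↥(Idx L) => ((w p : ℂ)) := by
      funext p
      rw [Pi.star_apply]
      exact Complex.conj_ofReal _
    rw [hstar]
  set B := S * W * S with hBdef
  have hBherm : Bᴴ = B := by
    rw [hBdef, Matrix.conjTranspose_mul, Matrix.conjTranspose_mul, hSherm, hWherm, mul_assoc]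
  have htr : Matrix.trace (W * Ξ * W * Ξ) = Matrix.trace (B * B) := by
    rw [← hSS, hBdef]
    have h1 : W * (S * S) * W * (S * S) = (W * S * S * W * S) * S := by noncomm_ring
    rw [h1, Matrix.trace_mul_comm]
    have h2 : S * (W * S * S * W * S) = (S * W * S) * (S * W * S) := by noncomm_ring
    rw [h2]
  have trace_eq : ∀ A : Matrix ↥(Idx L) ↥(Idx L) ℂ, Matrix.trace (A * A)
      = ∑ p : ↥(Idx L), ∑ q : ↥(Idx L), A p q * A q p := by
    intro A
    simp [Matrix.trace, Matrix.diag, Matrix.mul_apply]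
  have e1 : Matrix.trace (W * Ξ * W * Ξ)
      = ((∑ p : ↥(Idx L), ∑ q : ↥(Idx L), w p * w q * ‖Ξ p q‖ ^ 2 : ℝ) : ℂ) := by
    have h2 : W * Ξ * W * Ξ = (W * Ξ) * (W * Ξ) := by noncomm_ring
    rw [h2, trace_eq]
    push_cast
    refine Finset.sum_congr rfl fun p _ => Finset.sum_congr rfl fun q _ => ?_
    rw [hWdef, Matrix.diagonal_mul, Matrix.diagonal_mul, hΞconj p q]
    have h3 : ((w p : ℂ) * Ξ p q) * ((w q : ℂ) * (starRingEnd ℂ) (Ξ p q))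
        = ((w p : ℂ) * (w q : ℂ)) * (Ξ p q * (starRingEnd ℂ) (Ξ p q)) := by ring
    rw [h3, Complex.mul_conj]
    push_cast [← Complex.sq_norm]
    ring
  have e2 : Matrix.trace (B * B)
      = ((∑ p : ↥(Idx L), ∑ q : ↥(Idx L), Complex.normSq (B p q) : ℝ) : ℂ) := by
    rw [trace_eq]
    push_cast
    refine Finset.sum_congr rfl fun p _ => Finset.sum_congr rfl fun q _ => ?_
    have h4 : B q p = (starRingEnd ℂ) (B p q) := by
      conv_lhs => rw [← hBherm]
      rfl
    rw [h4, Complex.mul_conj]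
  have hreal : (∑ p : ↥(Idx L), ∑ q : ↥(Idx L), w p * w q * ‖Ξ p q‖ ^ 2)
      = ∑ p : ↥(Idx L), ∑ q : ↥(Idx L), Complex.normSq (B p q) := by
    have h5 := e1.symm.trans (htr.trans e2)
    exact_mod_cast h5
  -- B is nonzero
  have hSu : IsUnit S := by
    have hdet : S.det * S.det = Ξ.det := by rw [← Matrix.det_mul, hSS]
    have hΞdet : Ξ.det ≠ 0 := hΞ.det_pos.ne'
    have hSdet : S.det ≠ 0 := fun h => hΞdet (by rw [← hdet, h, mul_zero])
    exact (Matrix.isUnit_iff_isUnit_det S).mpr (isUnit_iff_ne_zero.mpr hSdet)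
  obtain ⟨ℓ₀, hℓ₀⟩ := Function.ne_iff.mp hd
  have hℓ₀' : d ℓ₀ ≠ 0 := by simpa using hℓ₀
  have hwp₀ : w (⟨(ℓ₀.val, 0), zero_mem_idx ℓ₀⟩ : ↥(Idx L)) ≠ 0 := by
    set p₀ : ↥(Idx L) := ⟨(ℓ₀.val, 0), zero_mem_idx ℓ₀⟩ with hp₀
    have h1 : (((1 + 2 * (p₀ : ℤ × ℤ).1 : ℤ) : ℝ)) ≠ 0 := by
      exact_mod_cast (idx_fst_pos p₀).ne'
    have h2 : (⟨(p₀ : ℤ × ℤ).1, idx_fst_mem p₀⟩ : ↥(Finset.Icc (1 : ℤ) L)) = ℓ₀ :=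
      Subtype.ext rfl
    show ((((1 + 2 * (p₀ : ℤ × ℤ).1 : ℤ) : ℝ))⁻¹ * d ⟨(p₀ : ℤ × ℤ).1, idx_fst_mem p₀⟩) ≠ 0
    rw [h2]
    exact mul_ne_zero (inv_ne_zero h1) hℓ₀'
  have hW0 : W ≠ 0 := by
    intro h
    apply hwp₀
    have h6 := congrFun (congrFun h ⟨(ℓ₀.val, 0), zero_mem_idx ℓ₀⟩) ⟨(ℓ₀.val, 0), zero_mem_idx ℓ₀⟩
    rw [hWdef] at h6
    simp only [Matrix.diagonal_apply_eq, Matrix.zero_apply, Complex.ofReal_eq_zero] at h6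
    exact h6
  have hB0 : B ≠ 0 := by
    intro h
    apply hW0
    have h7 : S * (W * S) = S * 0 := by
      rw [mul_zero, ← mul_assoc]
      rw [hBdef] at h
      exact h
    have h8 : W * S = 0 * S := by rw [zero_mul]; exact hSu.mul_left_cancel h7
    exact hSu.mul_right_cancel h8
  obtain ⟨p₁, q₁, hpq⟩ : ∃ p q, B p q ≠ 0 := by
    by_contra h
    push_neg at h
    exact hB0 (Matrix.ext fun p q => h p q)
  have hmain : 0 < ∑ p : ↥(Idx L), ∑ q : ↥(Idx L), w p * w q * ‖Ξ p q‖ ^ 2 := by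
    rw [hreal]
    refine Finset.sum_pos' (fun p _ => Finset.sum_nonneg fun q _ => Complex.normSq_nonneg _)
      ⟨p₁, Finset.mem_univ _, Finset.sum_pos' (fun q _ => Complex.normSq_nonneg _)
        ⟨q₁, Finset.mem_univ _, Complex.normSq_pos.mpr hpq⟩⟩
  linarith
end

section
/- Let {μ_1, …, μ_p} and {r_1, …, r_p} be two orthonormal families in ℝ^N. Define r̃_1 = r_1 and, recursively for j = 2, …, p, r̃_j = U_{j−1} r_j, where U_j = U_{μ_j, r̃_j} ∘ ⋯ ∘ U_{μ_1, r̃_1} and U_{a,b} x = x − (⟨a − b, x⟩ / (1 − ⟨a, b⟩)) (a − b); assume that ⟨μ_j, r̃_j⟩ ≠ 1 at every step j = 1, …, p (each r̃_j is a unit vector since each U_{a,b} preserves norms). Then for all 1 ≤ k < j ≤ p, ⟨r̃_j, μ_k⟩ = 0. -/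
open scoped RealInnerProductSpace

/-- The operator `U_{a,b} x = x − (⟨a − b, x⟩ / (1 − ⟨a, b⟩)) (a − b)`. -/
noncomputable def Uop {E : Type*} [NormedAddCommGroup E] [InnerProductSpace ℝ E]
    (a b x : E) : E :=
  x - (⟪a - b, x⟫ / (1 - ⟪a, b⟫)) • (a - b)

/-- `K2aux μ r j = (U_j, r̃_j)` (0-indexed), where `r̃_0 = r_0`, `U_j = U_{μ_j, r̃_j} ∘ ⋯ ∘
U_{μ_0, r̃_0}`, and `r̃_{j+1} = U_j r_{j+1}`. -/
noncomputable def K2aux {E : Type*} [NormedAddCommGroup E] [InnerProductSpace ℝ E]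
    (μ r : ℕ → E) : ℕ → (E → E) × E
  | 0 => (Uop (μ 0) (r 0), r 0)
  | j + 1 =>
    let prev := K2aux μ r j
    let rt := prev.1 (r (j + 1))
    (Uop (μ (j + 1)) rt ∘ prev.1, rt)

section Aux
variable {E : Type*} [NormedAddCommGroup E] [InnerProductSpace ℝ E]

lemma Uop_adj (a b x y : E) : ⟪Uop a b x, y⟫ = ⟪x, Uop a b y⟫ := by
  have key : ∀ (d : E) (c : ℝ) (x y : E),
      ⟪x - (⟪d, x⟫ / c) • d, y⟫ = ⟪x, y - (⟪d, y⟫ / c) • d⟫ := by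
    intro d c x y
    simp only [inner_sub_left, inner_sub_right, real_inner_smul_left, real_inner_smul_right,
      real_inner_comm x d]
    ring
  exact key (a - b) (1 - ⟪a, b⟫) x y

lemma Uop_fix (a b x : E) (h : ⟪a - b, x⟫ = 0) : Uop a b x = x := by
  simp [Uop, h]

lemma Uop_d (a b : E) (ha : ‖a‖ = 1) (hb : ‖b‖ = 1) :
    ⟪a - b, a - b⟫ = 2 * (1 - ⟪a, b⟫) := by
  rw [inner_sub_left, inner_sub_right, inner_sub_right]
  simp [inner_sub_left, inner_sub_right, real_inner_self_eq_norm_sq, ha, hb,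
    real_inner_comm b a]
  ring

lemma Uop_swap (a b : E) (ha : ‖a‖ = 1) (hab : ⟪a, b⟫ ≠ 1) : Uop a b a = b := by
  have h1 : ⟪a - b, a⟫ = 1 - ⟪a, b⟫ := by
    simp [inner_sub_left, real_inner_self_eq_norm_sq, ha, real_inner_comm b a]
  have hD : (1 : ℝ) - ⟪a, b⟫ ≠ 0 := sub_ne_zero.mpr (Ne.symm hab)
  rw [Uop, h1, div_self hD, one_smul]
  abel

lemma Uop_invol (a b : E) (ha : ‖a‖ = 1) (hb : ‖b‖ = 1) (x : E) :
    Uop a b (Uop a b x) = x := by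
  rcases eq_or_ne ⟪a, b⟫ 1 with h | h
  · simp [Uop, h]
  · have hD : (1 : ℝ) - ⟪a, b⟫ ≠ 0 := sub_ne_zero.mpr (Ne.symm h)
    have key : ∀ (d x : E), ⟪d, d⟫ = 2 * (1 - ⟪a, b⟫) →
        (x - (⟪d, x⟫ / (1 - ⟪a, b⟫)) • d) -
          (⟪d, x - (⟪d, x⟫ / (1 - ⟪a, b⟫)) • d⟫ / (1 - ⟪a, b⟫)) • d = x := by
      intro d x hdd
      simp only [inner_sub_right, real_inner_smul_right, hdd]
      rw [sub_sub, ← add_smul]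
      have : ⟪d, x⟫ / (1 - ⟪a, b⟫) +
          (⟪d, x⟫ - ⟪d, x⟫ / (1 - ⟪a, b⟫) * (2 * (1 - ⟪a, b⟫))) / (1 - ⟪a, b⟫) = 0 := by
        field_simp
        ring
      rw [this, zero_smul, sub_zero]
    exact key (a - b) x (Uop_d a b ha hb)

lemma Uop_norm (a b : E) (ha : ‖a‖ = 1) (hb : ‖b‖ = 1) (x : E) :
    ‖Uop a b x‖ = ‖x‖ := by
  have hsq : ⟪Uop a b x, Uop a b x⟫ = ⟪x, x⟫ := by
    rcases eq_or_ne ⟪a, b⟫ 1 with h | h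
    · simp [Uop, h]
    · have hD : (1 : ℝ) - ⟪a, b⟫ ≠ 0 := sub_ne_zero.mpr (Ne.symm h)
      have key : ∀ (d x : E), ⟪d, d⟫ = 2 * (1 - ⟪a, b⟫) →
          ⟪x - (⟪d, x⟫ / (1 - ⟪a, b⟫)) • d, x - (⟪d, x⟫ / (1 - ⟪a, b⟫)) • d⟫ = ⟪x, x⟫ := by
        intro d x hdd
        simp only [inner_sub_left, inner_sub_right, real_inner_smul_left,
          real_inner_smul_right, hdd, real_inner_comm x d]
        field_simp
        ring
      exact key (a - b) x (Uop_d a b ha hb)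
  rw [← Real.sqrt_sq (norm_nonneg (Uop a b x)), ← Real.sqrt_sq (norm_nonneg x),
    ← real_inner_self_eq_norm_sq, ← real_inner_self_eq_norm_sq, hsq]

end Aux

/-- The reverse composite `S_j = U_{μ_0, r̃_0} ∘ ⋯ ∘ U_{μ_j, r̃_j}`, adjoint/inverse of `U_j`. -/
noncomputable def Saux {E : Type*} [NormedAddCommGroup E] [InnerProductSpace ℝ E]
    (μ r : ℕ → E) : ℕ → (E → E)
  | 0 => Uop (μ 0) (r 0)
  | j + 1 => Saux μ r j ∘ Uop (μ (j + 1)) ((K2aux μ r j).1 (r (j + 1)))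

section Main
variable {E : Type*} [NormedAddCommGroup E] [InnerProductSpace ℝ E]

lemma K2_snd_succ (μ r : ℕ → E) (j : ℕ) :
    (K2aux μ r (j + 1)).2 = (K2aux μ r j).1 (r (j + 1)) := rfl

lemma K2_fst_succ (μ r : ℕ → E) (j : ℕ) (x : E) :
    (K2aux μ r (j + 1)).1 x =
      Uop (μ (j + 1)) ((K2aux μ r j).1 (r (j + 1))) ((K2aux μ r j).1 x) := rfl

lemma K2_main (p : ℕ) (μ r : ℕ → E)
    (hμn : ∀ k, k < p → ‖μ k‖ = 1) (hrn : ∀ k, k < p → ‖r k‖ = 1)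
    (hμo : ∀ k l, k < p → l < p → k ≠ l → ⟪μ k, μ l⟫ = 0)
    (hro : ∀ k l, k < p → l < p → k ≠ l → ⟪r k, r l⟫ = 0)
    (hstep : ∀ j, j < p → ⟪μ j, (K2aux μ r j).2⟫ ≠ 1) :
    ∀ j, j < p →
      (∀ k, k < j → ⟪(K2aux μ r j).2, μ k⟫ = 0) ∧
      ‖(K2aux μ r j).2‖ = 1 ∧
      (∀ x, ‖(K2aux μ r j).1 x‖ = ‖x‖) ∧
      (∀ x y, ⟪(K2aux μ r j).1 x, y⟫ = ⟪x, Saux μ r j y⟫) ∧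
      (∀ x, Saux μ r j ((K2aux μ r j).1 x) = x) ∧
      (∀ k, k ≤ j → Saux μ r j (μ k) = r k) := by
  intro j
  induction j with
  | zero =>
    intro h0
    refine ⟨fun k hk => absurd hk (Nat.not_lt_zero k), hrn 0 h0, ?_, ?_, ?_, ?_⟩
    · intro x; exact Uop_norm _ _ (hμn 0 h0) (hrn 0 h0) x
    · intro x y; exact Uop_adj _ _ x y
    · intro x; exact Uop_invol _ _ (hμn 0 h0) (hrn 0 h0) x
    · intro k hk
      interval_cases k
      show Uop (μ 0) (r 0) (μ 0) = r 0
      exact Uop_swap _ _ (hμn 0 h0) (hstep 0 h0)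
  | succ i ih =>
    intro hi1
    have hi : i < p := Nat.lt_of_succ_lt hi1
    obtain ⟨_, _, ihnorm, ihadj, ihinv, ihS⟩ := ih hi
    -- r̃_{i+1} is a unit vector
    have hrtn : ‖(K2aux μ r (i + 1)).2‖ = 1 := by
      rw [K2_snd_succ, ihnorm]; exact hrn (i + 1) hi1
    -- the main orthogonality at step i+1
    have hM : ∀ k, k < i + 1 → ⟪(K2aux μ r (i + 1)).2, μ k⟫ = 0 := by
      intro k hk
      have hk' : k ≤ i := Nat.lt_succ_iff.mp hk
      rw [K2_snd_succ, ihadj, ihS k hk']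
      exact hro (i + 1) k hi1 (lt_of_le_of_lt hk' hi) (by omega)
    have hrtn' : ‖(K2aux μ r i).1 (r (i + 1))‖ = 1 := by
      rw [← K2_snd_succ]; exact hrtn
    have hstep' : ⟪μ (i + 1), (K2aux μ r i).1 (r (i + 1))⟫ ≠ 1 := by
      rw [← K2_snd_succ]; exact hstep (i + 1) hi1
    refine ⟨hM, hrtn, ?_, ?_, ?_, ?_⟩
    · intro x
      rw [K2_fst_succ, Uop_norm _ _ (hμn (i + 1) hi1) hrtn', ihnorm]
    · intro x y
      rw [K2_fst_succ, Uop_adj, ihadj]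
      rfl
    · intro x
      show Saux μ r i (Uop (μ (i + 1)) ((K2aux μ r i).1 (r (i + 1)))
        ((K2aux μ r (i + 1)).1 x)) = x
      rw [K2_fst_succ]
      rw [Uop_invol _ _ (hμn (i + 1) hi1) hrtn']
      exact ihinv x
    · intro k hk
      show Saux μ r i (Uop (μ (i + 1)) ((K2aux μ r i).1 (r (i + 1))) (μ k)) = r k
      rcases eq_or_lt_of_le hk with heq | hlt
      · subst heq
        rw [Uop_swap _ _ (hμn (i + 1) hi1) hstep']
        exact ihinv (r (i + 1))
      · have hk' : k ≤ i := Nat.lt_succ_iff.mp hlt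
        rw [Uop_fix]
        · exact ihS k hk'
        · rw [inner_sub_left]
          have h1 : ⟪μ (i + 1), μ k⟫ = 0 :=
            hμo (i + 1) k hi1 (lt_of_le_of_lt hk' hi) (by omega)
          have h2 : ⟪(K2aux μ r i).1 (r (i + 1)), μ k⟫ = 0 := hM k hlt
          rw [h1, h2, sub_zero]

end Main


/-- let `{μ_1, …, μ_p}` and `{r_1, …, r_p}` be orthonormal families in `ℝ^N`
(indexed here by `0, …, p−1`), with `⟨μ_j, r̃_j⟩ ≠ 1` at every step of the recursive
construction of the `r̃_j`. Then `⟨r̃_j, μ_k⟩ = 0` whenever `k < j < p`. -/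
theorem tildeR_orthogonal_to_earlier_mu
    {N : ℕ} (p : ℕ) (μ r : ℕ → EuclideanSpace ℝ (Fin N))
    (hμ : Orthonormal ℝ (fun i : Fin p => μ i.val))
    (hr : Orthonormal ℝ (fun i : Fin p => r i.val))
    (hstep : ∀ j < p, ⟪μ j, (K2aux μ r j).2⟫ ≠ 1) :
    ∀ k j, k < j → j < p → ⟪(K2aux μ r j).2, μ k⟫ = 0 := by
  intro k j hkj hjp
  have hμn : ∀ k, k < p → ‖μ k‖ = 1 := fun k hk => hμ.1 ⟨k, hk⟩
  have hrn : ∀ k, k < p → ‖r k‖ = 1 := fun k hk => hr.1 ⟨k, hk⟩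
  have hμo : ∀ k l, k < p → l < p → k ≠ l → ⟪μ k, μ l⟫ = 0 := by
    intro k l hk hl h
    exact hμ.2 (i := ⟨k, hk⟩) (j := ⟨l, hl⟩) (by simp [Fin.ext_iff]; omega)
  have hro : ∀ k l, k < p → l < p → k ≠ l → ⟪r k, r l⟫ = 0 := by
    intro k l hk hl h
    exact hr.2 (i := ⟨k, hk⟩) (j := ⟨l, hl⟩) (by simp [Fin.ext_iff]; omega)
  exact ((K2_main p μ r hμn hrn hμo hro hstep) j hjp).1 k hkj
end
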